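/- Let A be a finite abelian group isomorphic to Z/r₁Z × Z/r₂Z with n ∣ r₁ ∣ r₂. The homomorphism ψ : A/nA → A[n] induced by Q ↦ (r₂/n)·Q is an isomorphism if and only if gcd(r₂/r₁, n) = 1. -/

import Mathlib

/-!
Put `m = r₂ / n = (r₁ / n) * (r₂ / r₁)`. Since `r₂` kills `A`, `Q ↦ m • Q` kills `nA` and lands in
`A[n]`. The induced map is injective iff `m • Q = 0` forces `Q ∈ nA`, a componentwise question about
cyclic groups: in `ZMod r` with `n ∣ r`, `((r / n) * k) • x = 0` means `n ∣ k * x`, and membership in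
`n • ZMod r` means `n ∣ x`. On `ZMod r₂` (`k = 1`) this always holds; on `ZMod r₁` (`k = r₂ / r₁`) it
holds iff `k` is coprime to `n`, the element `n / gcd k n` being a counterexample otherwise.
Surjectivity then comes for free, since `|A ⧸ nA| = |A[n]|` for finite `A`; `A` is infinite only
when `r₂ = 0`, and then coprimality forces `n = 1`, where `A[n] = 0`.
-/

open Function

section SMulQuotient

variable {A : Type*} [AddCommGroup A]

def nsmulQuotientRangeToKer (a b : ℕ) (h : ∀ x : A, (a * b) • x = 0) :
    A ⧸ (zsmulAddGroupHom (a : ℤ) : A →+ A).range →+ (zsmulAddGroupHom (a : ℤ) : A →+ A).ker :=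
  QuotientAddGroup.lift _
    ((DistribSMul.toAddMonoidHom A b).codRestrict _ fun x => by
      simp [natCast_zsmul, smul_smul, h])
    (by
      rintro _ ⟨y, rfl⟩
      ext
      simp [natCast_zsmul, smul_smul, mul_comm b a, h])

theorem coe_nsmulQuotientRangeToKer_mk (a b : ℕ) (h : ∀ x : A, (a * b) • x = 0) (x : A) :
    (nsmulQuotientRangeToKer a b h (QuotientAddGroup.mk x) : A) = b • x :=
  rfl

theorem mem_range_zsmul_prod {B : Type*} [AddCommGroup B] (n : ℤ) (x : A × B) :
    x ∈ (zsmulAddGroupHom n : A × B →+ A × B).range ↔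
      x.1 ∈ (zsmulAddGroupHom n : A →+ A).range ∧ x.2 ∈ (zsmulAddGroupHom n : B →+ B).range := by
  constructor
  · rintro ⟨y, rfl⟩
    exact ⟨⟨y.1, rfl⟩, ⟨y.2, rfl⟩⟩
  · rintro ⟨⟨y₁, hy₁⟩, ⟨y₂, hy₂⟩⟩
    exact ⟨(y₁, y₂), Prod.ext hy₁ hy₂⟩

theorem card_quotient_range_eq_card_ker [Finite A] (f : A →+ A) :
    Nat.card (A ⧸ f.range) = Nat.card f.ker := by
  have h := f.range.card_mul_index
  rw [← f.ker.card_mul_index, AddSubgroup.index_ker, mul_comm] at h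
  exact Nat.eq_of_mul_eq_mul_right Nat.card_pos h

end SMulQuotient

theorem QuotientAddGroup.injective_iff_of_coe_mk {A B : Type*} [AddCommGroup A] [AddGroup B]
    {H : AddSubgroup A} {K : AddSubgroup B} (ψ : A ⧸ H →+ K) (f : A → B)
    (hψ : ∀ x, (ψ (QuotientAddGroup.mk x) : B) = f x) :
    Injective ψ ↔ ∀ x, f x = 0 → x ∈ H := by
  rw [injective_iff_map_eq_zero, QuotientAddGroup.mk_surjective.forall]
  simp only [← ZeroMemClass.coe_eq_zero, hψ, QuotientAddGroup.eq_zero_iff]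

namespace ZMod

theorem nsmul_eq_zero_of_dvd {r s : ℕ} (h : r ∣ s) (x : ZMod r) : s • x = 0 := by
  rw [nsmul_eq_mul, (natCast_eq_zero_iff s r).2 h, zero_mul]

theorem mem_range_zsmul_iff_castHom_eq_zero {n r : ℕ} (h : n ∣ r) (x : ZMod r) :
    x ∈ (zsmulAddGroupHom (n : ℤ) : ZMod r →+ ZMod r).range ↔ castHom h (ZMod n) x = 0 := by
  constructor
  · rintro ⟨y, rfl⟩
    rw [zsmulAddGroupHom_apply, map_zsmul, natCast_zsmul, nsmul_eq_mul, natCast_self, zero_mul]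
  · intro hx
    rw [castHom_apply, ← intCast_cast, intCast_zmod_eq_zero_iff_dvd] at hx
    obtain ⟨t, ht⟩ := hx
    refine ⟨t, ?_⟩
    rw [zsmulAddGroupHom_apply, zsmul_eq_mul, ← Int.cast_mul, ← ht,
      intCast_cast, cast_id', id]

theorem coprime_of_forall_nsmul_eq_zero_imp {n r : ℕ} (h : n ∣ r) (hn : 0 < n) (k : ℕ)
    (H : ∀ x : ZMod r, (r / n * k) • x = 0 → castHom h (ZMod n) x = 0) : k.Coprime n := by
  -- `a = n / gcd k n` is killed by `(r / n) * k` but is not a multiple of `n` unless `gcd k n = 1`.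
  obtain ⟨a, ha⟩ := Nat.gcd_dvd_right k n
  obtain ⟨b, hb⟩ := Nat.gcd_dvd_left k n
  set g := Nat.gcd k n
  have hr : r ∣ r / n * k * a :=
    ⟨b, calc r / n * k * a = r / n * (g * a) * b := by rw [hb]; ring
      _ = r * b := by rw [← ha, Nat.div_mul_cancel h]⟩
  have hx := H a (by rw [nsmul_eq_mul, ← Nat.cast_mul, natCast_eq_zero_iff]; exact hr)
  rw [map_natCast, natCast_eq_zero_iff] at hx
  have ha₀ : 0 < a := Nat.pos_of_mul_pos_left (ha ▸ hn)
  exact Nat.dvd_one.1 ((Nat.mul_dvd_mul_iff_right ha₀).1 (by rwa [one_mul, ← ha]))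

theorem castHom_eq_zero_of_nsmul_eq_zero {n r : ℕ} (h : n ∣ r) (hr : r ≠ 0) {k : ℕ}
    (hk : k.Coprime n) {x : ZMod r} (hx : (r / n * k) • x = 0) : castHom h (ZMod n) x = 0 := by
  have : NeZero r := ⟨hr⟩
  obtain ⟨c, hc⟩ := h
  have hc₀ : 0 < c := Nat.pos_of_ne_zero (right_ne_zero_of_mul (hc ▸ hr))
  have hn : 0 < n := Nat.pos_of_ne_zero (left_ne_zero_of_mul (hc ▸ hr))
  have hrn : r / n = c := by rw [hc, Nat.mul_div_cancel_left c hn]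
  rw [← natCast_zmod_val x, nsmul_eq_mul, ← Nat.cast_mul, natCast_eq_zero_iff] at hx
  have hcn : c * n ∣ c * (k * x.val) := by
    rw [← mul_assoc, ← hrn]
    exact (dvd_of_eq (Nat.div_mul_cancel ⟨c, hc⟩)).trans hx
  have hnx : n ∣ x.val := hk.symm.dvd_of_dvd_mul_left ((Nat.mul_dvd_mul_iff_left hc₀).1 hcn)
  rw [← natCast_zmod_val x, map_natCast, natCast_eq_zero_iff]
  exact hnx

end ZMod

theorem Nat.div_mul_div_cancel_of_dvd {a b c : ℕ} (hcb : c ∣ b) (hba : b ∣ a) :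
    b / c * (a / b) = a / c := by
  obtain ⟨d, rfl⟩ := hcb
  obtain ⟨e, rfl⟩ := hba
  rcases Nat.eq_zero_or_pos c with rfl | hc
  · simp
  rcases Nat.eq_zero_or_pos d with rfl | hd
  · simp
  rw [Nat.mul_div_cancel_left d hc, Nat.mul_div_cancel_left e (Nat.mul_pos hc hd), mul_assoc,
    Nat.mul_div_cancel_left _ hc]

theorem Nat.ne_zero_of_coprime_div {n r₁ r₂ : ℕ} (h : (r₂ / r₁).Coprime n) (hn : n ≠ 1) : r₂ ≠ 0 := by
  rintro rfl
  exact hn (by simpa using h)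

section ProdZMod

variable {n r₁ r₂ : ℕ}

theorem nsmul_prod_eq_zero (h₂ : r₁ ∣ r₂) (Q : ZMod r₁ × ZMod r₂) : r₂ • Q = 0 :=
  Prod.ext (ZMod.nsmul_eq_zero_of_dvd h₂ Q.1) (ZMod.nsmul_eq_zero_of_dvd dvd_rfl Q.2)

theorem forall_nsmul_eq_zero_imp_mem_range_iff_coprime (h₁ : n ∣ r₁) (h₂ : r₁ ∣ r₂) (hn : 0 < n) :
    (∀ Q : ZMod r₁ × ZMod r₂, (r₂ / n) • Q = 0 →
      Q ∈ (zsmulAddGroupHom (n : ℤ) : ZMod r₁ × ZMod r₂ →+ ZMod r₁ × ZMod r₂).range) ↔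
    (r₂ / r₁).Coprime n := by
  have hm : r₂ / n = r₁ / n * (r₂ / r₁) := (Nat.div_mul_div_cancel_of_dvd h₁ h₂).symm
  simp only [mem_range_zsmul_prod, ZMod.mem_range_zsmul_iff_castHom_eq_zero h₁,
    ZMod.mem_range_zsmul_iff_castHom_eq_zero (h₁.trans h₂)]
  constructor
  · intro H
    refine ZMod.coprime_of_forall_nsmul_eq_zero_imp h₁ hn _ fun x hx => (H (x, 0) ?_).1
    rw [hm, Prod.smul_mk, hx, smul_zero, Prod.mk_zero_zero]
  · intro hk Q hQ
    rcases eq_or_ne n 1 with rfl | hn1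
    · exact ⟨Subsingleton.elim _ _, Subsingleton.elim _ _⟩
    have hr₂ := Nat.ne_zero_of_coprime_div hk hn1
    rw [Prod.ext_iff, Prod.smul_fst, Prod.smul_snd] at hQ
    exact ⟨ZMod.castHom_eq_zero_of_nsmul_eq_zero h₁ (ne_zero_of_dvd_ne_zero hr₂ h₂) hk (hm ▸ hQ.1),
      ZMod.castHom_eq_zero_of_nsmul_eq_zero _ hr₂ (Nat.coprime_one_left n)
        ((mul_one (r₂ / n)).symm ▸ hQ.2)⟩

end ProdZMod

/-- Let `A = ZMod r₁ × ZMod r₂` with `n ∣ r₁ ∣ r₂`.  The homomorphism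
`ψ : A ⧸ nA → A[n]` induced by `Q ↦ (r₂/n) • Q` is well defined, and any such
induced homomorphism is an isomorphism if and only if `gcd (r₂/r₁) n = 1`.
Here `nA` is the range and `A[n]` the kernel of the multiplication-by-`n` map. -/
theorem stmt_1 (n r₁ r₂ : ℕ) (hn : 0 < n) (h₁ : n ∣ r₁) (h₂ : r₁ ∣ r₂) :
    (∃ ψ : (ZMod r₁ × ZMod r₂) ⧸
          (AddMonoidHom.range (zsmulAddGroupHom (n : ℤ) :
            (ZMod r₁ × ZMod r₂) →+ (ZMod r₁ × ZMod r₂))) →+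
          (AddMonoidHom.ker (zsmulAddGroupHom (n : ℤ) :
            (ZMod r₁ × ZMod r₂) →+ (ZMod r₁ × ZMod r₂))),
        ∀ Q : ZMod r₁ × ZMod r₂,
          (ψ (QuotientAddGroup.mk Q) : ZMod r₁ × ZMod r₂) = (r₂ / n : ℕ) • Q) ∧
    (∀ ψ : (ZMod r₁ × ZMod r₂) ⧸
          (AddMonoidHom.range (zsmulAddGroupHom (n : ℤ) :
            (ZMod r₁ × ZMod r₂) →+ (ZMod r₁ × ZMod r₂))) →+
          (AddMonoidHom.ker (zsmulAddGroupHom (n : ℤ) :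
            (ZMod r₁ × ZMod r₂) →+ (ZMod r₁ × ZMod r₂))),
        (∀ Q : ZMod r₁ × ZMod r₂,
          (ψ (QuotientAddGroup.mk Q) : ZMod r₁ × ZMod r₂) = (r₂ / n : ℕ) • Q) →
        (Function.Bijective ψ ↔ Nat.gcd (r₂ / r₁) n = 1)) := by
  have hexp : ∀ Q : ZMod r₁ × ZMod r₂, (n * (r₂ / n)) • Q = 0 := by
    rw [Nat.mul_div_cancel' (h₁.trans h₂)]
    exact nsmul_prod_eq_zero h₂
  refine ⟨⟨nsmulQuotientRangeToKer n (r₂ / n) hexp, coe_nsmulQuotientRangeToKer_mk _ _ hexp⟩,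
    fun ψ hψ => ?_⟩
  have hinj : Injective ψ ↔ (r₂ / r₁).Coprime n :=
    (QuotientAddGroup.injective_iff_of_coe_mk ψ _ hψ).trans
      (forall_nsmul_eq_zero_imp_mem_range_iff_coprime h₁ h₂ hn)
  rw [← Nat.coprime_iff_gcd_eq_one, ← hinj]
  refine ⟨Bijective.injective, fun hψinj => ?_⟩
  rcases eq_or_ne n 1 with rfl | hn1
  · refine ⟨hψinj, ?_⟩
    rintro ⟨y, hy⟩
    rw [AddMonoidHom.mem_ker, zsmulAddGroupHom_apply, Nat.cast_one, one_zsmul] at hy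
    subst hy
    exact ⟨0, map_zero ψ⟩
  have hr₂ : r₂ ≠ 0 := Nat.ne_zero_of_coprime_div (hinj.1 hψinj) hn1
  have : NeZero r₁ := ⟨ne_zero_of_dvd_ne_zero hr₂ h₂⟩
  have : NeZero r₂ := ⟨hr₂⟩
  exact (Nat.bijective_iff_injective_and_card ψ).2 ⟨hψinj, card_quotient_range_eq_card_ker _⟩
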